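/- arXiv:2603.02155 — 3 statements merged into one kernel-verified Lean document; each statement's English description precedes it below -/
import Mathlib

section
/- Let $\eta > 0$, $\mathcal{A}$ a finite set, $\pi^{\mathsf{ref}} \in \Delta(\mathcal{A})$ with full support, and let $\hat{r}, r : \mathcal{A} \to \mathbb{R}$ satisfy $\hat{r}(a) \geq r(a)$ for all $a$. Let $\hat{\pi}(a) \propto \pi^{\mathsf{ref}}(a)e^{\eta \hat{r}(a)}$ and $\pi^*(a) \propto \pi^{\mathsf{ref}}(a)e^{\eta r(a)}$. Then $J(\pi^*) - J(\hat{\pi}) \leq \eta \sum_a \hat{\pi}(a)(\hat{r}(a) - r(a))^2$, where $J(\pi)=\sum_a \pi(a)(r(a)-\eta^{-1}\log(\pi(a)/\pi^{\mathsf{ref}}(a)))$. -/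
/-!
Write `Z(f) = ∑ₐ πref(a) e^{f(a)}` and `π_f ∝ πref e^{f}`. For a Gibbs policy the KL term is
explicit, `J(π_{ηg}) = E_{π_{ηg}}[r - g] + η⁻¹ log Z(ηg)`, so `J(π*) = η⁻¹ log Z(ηr)` and
`J(π*) - J(π̂) = η⁻¹ log (Z(ηr) / Z(ηr̂)) + E_{π̂}[r̂ - r]`. Changing measure,
`Z(ηr) / Z(ηr̂) = E_{π̂}[e^{-η(r̂ - r)}]`, and optimism makes the exponent nonpositive, where
`e^x ≤ 1 + x + x²`; together with `log y ≤ y - 1` the first-order terms cancel and only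
`η E_{π̂}[(r̂ - r)²]` remains.
-/

open Finset

-- Kept local: under `open Real` the notation `π` would split the identifier `πref` below.
section

open Real

lemma Real.exp_le_one_add_add_sq_of_nonpos {x : ℝ} (hx : x ≤ 0) : exp x ≤ 1 + x + x ^ 2 := by
  have h1x : 0 < 1 - x := by linarith
  calc exp x = (exp (-x))⁻¹ := by rw [exp_neg, inv_inv]
    _ ≤ (1 - x)⁻¹ := inv_anti₀ h1x (by simpa using one_sub_le_exp_neg x)
    _ ≤ 1 + x + x ^ 2 := by
      rw [inv_le_iff_one_le_mul₀ h1x]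
      nlinarith [pow_two_nonneg x]

lemma Real.log_sum_mul_exp_le {ι : Type*} (s : Finset ι) {q x : ι → ℝ}
    (hq : ∀ i ∈ s, 0 ≤ q i) (hq_sum : ∑ i ∈ s, q i = 1) (hx : ∀ i ∈ s, x i ≤ 0) :
    log (∑ i ∈ s, q i * exp (x i)) ≤ ∑ i ∈ s, q i * (x i + x i ^ 2) := by
  have hpos : 0 < ∑ i ∈ s, q i * exp (x i) := by
    obtain ⟨i, hi, hqi⟩ := exists_ne_zero_of_sum_ne_zero (hq_sum.trans_ne one_ne_zero)
    exact sum_pos' (fun j hj => mul_nonneg (hq j hj) (exp_pos _).le)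
      ⟨i, hi, mul_pos ((hq i hi).lt_of_ne' hqi) (exp_pos _)⟩
  calc log (∑ i ∈ s, q i * exp (x i))
      ≤ ∑ i ∈ s, q i * exp (x i) - 1 := log_le_sub_one_of_pos hpos
    _ ≤ ∑ i ∈ s, q i * (1 + x i + x i ^ 2) - ∑ i ∈ s, q i := by
      rw [hq_sum]
      gcongr with i hi
      · exact hq i hi
      · exact exp_le_one_add_add_sq_of_nonpos (hx i hi)
    _ = ∑ i ∈ s, q i * (x i + x i ^ 2) := by
      rw [← sum_sub_distrib]
      exact sum_congr rfl fun i _ => by ring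

section Gibbs

variable {A : Type*} [Fintype A]

noncomputable def partitionFn (p f : A → ℝ) : ℝ := ∑ a, p a * exp (f a)

noncomputable def gibbs (p f : A → ℝ) (a : A) : ℝ := p a * exp (f a) / partitionFn p f

variable {p : A → ℝ} (f : A → ℝ)

lemma partitionFn_pos [Nonempty A] (hp : ∀ a, 0 < p a) : 0 < partitionFn p f :=
  sum_pos (fun a _ => mul_pos (hp a) (exp_pos _)) univ_nonempty

lemma gibbs_pos [Nonempty A] (hp : ∀ a, 0 < p a) (a : A) : 0 < gibbs p f a :=
  div_pos (mul_pos (hp a) (exp_pos _)) (partitionFn_pos f hp)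

lemma sum_gibbs [Nonempty A] (hp : ∀ a, 0 < p a) : ∑ a, gibbs p f a = 1 := by
  simp only [gibbs]
  rw [← sum_div, ← partitionFn, div_self (partitionFn_pos f hp).ne']

lemma log_gibbs_div [Nonempty A] (hp : ∀ a, 0 < p a) (a : A) :
    log (gibbs p f a / p a) = f a - log (partitionFn p f) := by
  have hdiv : gibbs p f a / p a = exp (f a) / partitionFn p f := by
    rw [gibbs, div_right_comm, mul_div_cancel_left₀ _ (hp a).ne']
  rw [hdiv, log_div (exp_ne_zero _) (partitionFn_pos f hp).ne', log_exp]

lemma sum_gibbs_mul_sub_log [Nonempty A] (hp : ∀ a, 0 < p a) (η : ℝ) (r : A → ℝ) :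
    ∑ a, gibbs p f a * (r a - η⁻¹ * log (gibbs p f a / p a)) =
      ∑ a, gibbs p f a * (r a - η⁻¹ * f a) + η⁻¹ * log (partitionFn p f) := by
  simp only [log_gibbs_div f hp, mul_sub, sum_sub_distrib]
  rw [← sum_mul, sum_gibbs f hp]
  ring

lemma sum_gibbs_mul_exp_sub (g : A → ℝ) :
    ∑ a, gibbs p f a * exp (g a - f a) = partitionFn p g / partitionFn p f := by
  rw [partitionFn, sum_div]
  refine sum_congr rfl fun a _ => ?_
  rw [gibbs, div_mul_eq_mul_div, mul_assoc, ← exp_add, add_sub_cancel]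

end Gibbs

end

open Finset in
theorem stmt_2_general {A : Type*} [Fintype A] [Nonempty A]
    (η : ℝ) (hη : 0 < η) (r rhat : A → ℝ) (πref : A → ℝ)
    (href_pos : ∀ a, 0 < πref a)
    (hopt : ∀ a, r a ≤ rhat a)
    (J : (A → ℝ) → ℝ)
    (hJ : ∀ π, J π = ∑ a, π a * (r a - η⁻¹ * Real.log (π a / πref a)))
    (πstar πhat : A → ℝ)
    (hstar : ∀ a, πstar a = πref a * Real.exp (η * r a)
        / ∑ b, πref b * Real.exp (η * r b))
    (hhat : ∀ a, πhat a = πref a * Real.exp (η * rhat a)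
        / ∑ b, πref b * Real.exp (η * rhat b)) :
    J πstar - J πhat ≤ η * ∑ a, πhat a * (rhat a - r a) ^ 2 := by
  obtain rfl : πstar = gibbs πref (fun a => η * r a) := funext hstar
  obtain rfl : πhat = gibbs πref (fun a => η * rhat a) := funext hhat
  set πstar := gibbs πref (fun a => η * r a)
  set πhat := gibbs πref (fun a => η * rhat a)
  set S := ∑ a, πhat a * Real.exp (η * r a - η * rhat a)
  have hS : S = (partitionFn πref fun a => η * r a) / partitionFn πref fun a => η * rhat a :=
    sum_gibbs_mul_exp_sub _ _
  have hgap : J πstar - J πhat =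
      η⁻¹ * Real.log S + ∑ a, πhat a * (rhat a - r a) := by
    rw [hJ, hJ, sum_gibbs_mul_sub_log _ href_pos, sum_gibbs_mul_sub_log _ href_pos, hS,
      Real.log_div (partitionFn_pos _ href_pos).ne' (partitionFn_pos _ href_pos).ne']
    simp only [inv_mul_cancel_left₀ hη.ne', sub_self, mul_zero, sum_const_zero, zero_add,
      mul_sub, sum_sub_distrib]
    ring
  have hmoment :
      Real.log S ≤ ∑ a, πhat a * ((η * r a - η * rhat a) + (η * r a - η * rhat a) ^ 2) :=
    Real.log_sum_mul_exp_le univ (fun a _ => (gibbs_pos _ href_pos a).le)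
      (sum_gibbs _ href_pos) (fun a _ => by nlinarith [hopt a])
  have hscaled : η⁻¹ * Real.log S ≤
      η * ∑ a, πhat a * (rhat a - r a) ^ 2 - ∑ a, πhat a * (rhat a - r a) := by
    refine (mul_le_mul_of_nonneg_left hmoment (inv_nonneg.2 hη.le)).trans_eq ?_
    rw [mul_sum, mul_sum, ← sum_sub_distrib]
    refine sum_congr rfl fun a _ => ?_
    field_simp
    ring
  linarith

open Finset in
/-- KL-regularized regret decomposition under optimism: if `r̂ ≥ r` pointwise,
then `J(π*) - J(π̂) ≤ η ∑ a, π̂(a) (r̂(a) - r(a))²`. -/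
theorem stmt_2 {A : Type*} [Fintype A] [Nonempty A]
    (η : ℝ) (hη : 0 < η) (r rhat : A → ℝ) (πref : A → ℝ)
    (href_pos : ∀ a, 0 < πref a) (href_sum : ∑ a, πref a = 1)
    (hopt : ∀ a, r a ≤ rhat a)
    (J : (A → ℝ) → ℝ)
    (hJ : ∀ π, J π = ∑ a, π a * (r a - η⁻¹ * Real.log (π a / πref a)))
    (πstar πhat : A → ℝ)
    (hstar : ∀ a, πstar a = πref a * Real.exp (η * r a)
        / ∑ b, πref b * Real.exp (η * r b))
    (hhat : ∀ a, πhat a = πref a * Real.exp (η * rhat a)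
        / ∑ b, πref b * Real.exp (η * rhat b)) :
    J πstar - J πhat ≤ η * ∑ a, πhat a * (rhat a - r a) ^ 2 :=
  stmt_2_general η hη r rhat πref href_pos hopt J hJ πstar πhat hstar hhat
end

section
/- Let $K \geq 9$, $\eta > 0$, $\delta > 0$ with $\eta\delta \geq 2\log K$. On a $K$-armed bandit with uniform reference policy, define $r_1(1)=\delta$, $r_1(i)=0$ for $i\geq 2$, and $r_2(2)=2\delta$, $r_2(i)=r_1(i)$ otherwise. Then for the policy $\hat\pi(a)\propto\sqrt{\pi_1^*(a)\pi_2^*(a)}$ (which minimizes the sum of gaps), $\mathrm{SubOpt}_{r_1}(\hat\pi) + \mathrm{SubOpt}_{r_2}(\hat\pi) \geq \delta/2$, where $\mathrm{SubOpt}_{r_i}(\pi) = J_{r_i}(\pi_i^*) - J_{r_i}(\pi)$ and $\pi_i^*$ is the optimal KL-regularized policy for $r_i$. -/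
/-!
For a Gibbs policy `π* ∝ πref · exp (η r)` with partition function `Z_r`, every policy `π`
satisfies `J_r π = η⁻¹ log Z_r - η⁻¹ KL(π ‖ π*)`, so the suboptimality gap of `π` is
`η⁻¹ KL(π ‖ π*)`. For the normalized geometric mean `π̂` of `π₁*` and `π₂*` the two divergences
add up to `-2 log ∑ √(π₁* π₂*)`, and for Gibbs policies that Bhattacharyya coefficient is
`Z_{(r₁+r₂)/2} / √(Z_{r₁} Z_{r₂})`. The sum of gaps is therefore
`η⁻¹ log (Z_{r₁} Z_{r₂} / Z_{(r₁+r₂)/2}²)`. On the hard instance, with `e = exp (ηδ) ≥ K²`,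
the three partition functions are `≥ e/K`, `≥ e²/K` and `≤ 3e/K`, so the logarithm is at least
`ηδ - log 9 ≥ ηδ/2`.
-/

open Finset

lemma Fin.sum_eq_of_eq_const_of_two_le {K : ℕ} (hK : 2 ≤ K) (f : Fin K → ℝ) (c : ℝ)
    (hf : ∀ a : Fin K, 2 ≤ a.val → f a = c) :
    ∑ a, f a = f ⟨0, by omega⟩ + f ⟨1, by omega⟩ + ((K : ℝ) - 2) * c := by
  obtain ⟨k, rfl⟩ : ∃ k, K = k + 2 := ⟨K - 2, by omega⟩
  rw [Fin.sum_univ_succ, Fin.sum_univ_succ,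
    Finset.sum_congr rfl fun i _ => hf i.succ.succ (by simp)]
  simp only [succ_zero_eq_one, Finset.sum_const, card_univ, Fintype.card_fin, nsmul_eq_mul,
    zero_eta, mk_one, Nat.cast_add, Nat.cast_ofNat, add_sub_cancel_right]
  ring

namespace KLRegularizedBandit

open Real

variable {α : Type*} [Fintype α]

noncomputable def objective (η : ℝ) (ref r p : α → ℝ) : ℝ :=
  ∑ a, p a * (r a - η⁻¹ * log (p a / ref a))

noncomputable def partition (η : ℝ) (ref r : α → ℝ) : ℝ :=
  ∑ a, ref a * exp (η * r a)

noncomputable def gibbs (η : ℝ) (ref r : α → ℝ) (a : α) : ℝ :=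
  ref a * exp (η * r a) / partition η ref r

noncomputable def relEntropy (p q : α → ℝ) : ℝ :=
  ∑ a, p a * log (p a / q a)

noncomputable def geomMeanPolicy (p q : α → ℝ) (a : α) : ℝ :=
  √(p a * q a) / ∑ b, √(p b * q b)

variable [Nonempty α] {η : ℝ} {ref : α → ℝ}

lemma partition_pos (href : ∀ a, 0 < ref a) (r : α → ℝ) : 0 < partition η ref r :=
  sum_pos (fun a _ => mul_pos (href a) (exp_pos _)) univ_nonempty

lemma gibbs_pos (href : ∀ a, 0 < ref a) (r : α → ℝ) (a : α) : 0 < gibbs η ref r a :=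
  div_pos (mul_pos (href a) (exp_pos _)) (partition_pos href r)

lemma sum_gibbs (href : ∀ a, 0 < ref a) (r : α → ℝ) : ∑ a, gibbs η ref r a = 1 := by
  simp only [gibbs, ← sum_div]
  exact div_self (partition_pos href r).ne'

lemma objective_eq_sub_relEntropy (hη : η ≠ 0) (href : ∀ a, 0 < ref a) (r : α → ℝ)
    {p : α → ℝ} (hp : ∀ a, 0 < p a) (hsum : ∑ a, p a = 1) :
    objective η ref r p
      = η⁻¹ * log (partition η ref r) - η⁻¹ * relEntropy p (gibbs η ref r) := by
  have hZ := partition_pos (η := η) href r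
  have key : ∀ a, r a - η⁻¹ * log (p a / ref a)
      = η⁻¹ * log (partition η ref r) - η⁻¹ * log (p a / gibbs η ref r a) := by
    intro a
    have hpa := (hp a).ne'
    have hra := (href a).ne'
    rw [gibbs, div_div_eq_mul_div, log_div hpa hra, log_div (mul_ne_zero hpa hZ.ne')
      (mul_ne_zero hra (exp_pos _).ne'), log_mul hpa hZ.ne', log_mul hra (exp_pos _).ne', log_exp]
    field_simp
    ring
  simp only [objective, relEntropy, key, mul_sub, sum_sub_distrib, ← sum_mul, hsum]
  simp only [mul_left_comm (p _) η⁻¹, ← mul_sum]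
  ring

lemma objective_gibbs_sub (hη : η ≠ 0) (href : ∀ a, 0 < ref a) (r : α → ℝ)
    {p : α → ℝ} (hp : ∀ a, 0 < p a) (hsum : ∑ a, p a = 1) :
    objective η ref r (gibbs η ref r) - objective η ref r p
      = η⁻¹ * relEntropy p (gibbs η ref r) := by
  have hself : relEntropy (gibbs η ref r) (gibbs η ref r) = 0 := by
    simp [relEntropy, div_self (gibbs_pos href r _).ne']
  rw [objective_eq_sub_relEntropy hη href r hp hsum,
    objective_eq_sub_relEntropy hη href r (gibbs_pos href r) (sum_gibbs href r), hself]
  ring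

section GeomMean

variable {p q : α → ℝ}

lemma sum_sqrt_mul_pos (hp : ∀ a, 0 < p a) (hq : ∀ a, 0 < q a) : 0 < ∑ b, √(p b * q b) :=
  sum_pos (fun b _ => sqrt_pos.2 (mul_pos (hp b) (hq b))) univ_nonempty

lemma geomMeanPolicy_pos (hp : ∀ a, 0 < p a) (hq : ∀ a, 0 < q a) (a : α) :
    0 < geomMeanPolicy p q a :=
  div_pos (sqrt_pos.2 (mul_pos (hp a) (hq a))) (sum_sqrt_mul_pos hp hq)

lemma sum_geomMeanPolicy (hp : ∀ a, 0 < p a) (hq : ∀ a, 0 < q a) :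
    ∑ a, geomMeanPolicy p q a = 1 := by
  simp only [geomMeanPolicy, ← sum_div]
  exact div_self (sum_sqrt_mul_pos hp hq).ne'

lemma relEntropy_geomMeanPolicy_add (hp : ∀ a, 0 < p a) (hq : ∀ a, 0 < q a) :
    relEntropy (geomMeanPolicy p q) p + relEntropy (geomMeanPolicy p q) q
      = -2 * log (∑ b, √(p b * q b)) := by
  set S := ∑ b, √(p b * q b) with hS_def
  have key : ∀ a, log (geomMeanPolicy p q a / p a) + log (geomMeanPolicy p q a / q a)
      = -2 * log S := by
    intro a
    have hρ := geomMeanPolicy_pos hp hq a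
    rw [← log_mul (div_pos hρ (hp a)).ne' (div_pos hρ (hq a)).ne']
    have : geomMeanPolicy p q a / p a * (geomMeanPolicy p q a / q a) = (S ^ 2)⁻¹ := by
      rw [geomMeanPolicy, ← hS_def, div_mul_div_comm, ← sq, div_pow,
        sq_sqrt (mul_pos (hp a) (hq a)).le]
      field_simp [(hp a).ne', (hq a).ne']
    rw [this, log_inv, log_pow]
    push_cast
    ring
  simp only [relEntropy, ← sum_add_distrib, ← mul_add, key, ← sum_mul,
    sum_geomMeanPolicy hp hq, one_mul]

end GeomMean

lemma sum_sqrt_gibbs_mul (href : ∀ a, 0 < ref a) (r₁ r₂ : α → ℝ) :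
    ∑ a, √(gibbs η ref r₁ a * gibbs η ref r₂ a)
      = partition η ref (fun a => (r₁ a + r₂ a) / 2)
          / √(partition η ref r₁ * partition η ref r₂) := by
  have hZ := mul_pos (partition_pos (η := η) href r₁) (partition_pos (η := η) href r₂)
  have key : ∀ a, √(gibbs η ref r₁ a * gibbs η ref r₂ a)
      = ref a * exp (η * ((r₁ a + r₂ a) / 2))
          / √(partition η ref r₁ * partition η ref r₂) := by
    intro a
    have hsq : exp (η * r₁ a) * exp (η * r₂ a) = exp (η * ((r₁ a + r₂ a) / 2)) ^ 2 := by
      rw [← exp_add, ← exp_nat_mul]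
      ring_nf
    rw [gibbs, gibbs, div_mul_div_comm, mul_mul_mul_comm, hsq, ← sq, ← mul_pow,
      sqrt_div' _ hZ.le, sqrt_sq (mul_pos (href a) (exp_pos _)).le]
  simp only [key, ← sum_div]
  rfl

theorem objective_gap_add_geomMeanPolicy (hη : η ≠ 0) (href : ∀ a, 0 < ref a)
    (r₁ r₂ : α → ℝ) :
    (objective η ref r₁ (gibbs η ref r₁)
        - objective η ref r₁ (geomMeanPolicy (gibbs η ref r₁) (gibbs η ref r₂)))
      + (objective η ref r₂ (gibbs η ref r₂)
        - objective η ref r₂ (geomMeanPolicy (gibbs η ref r₁) (gibbs η ref r₂)))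
      = η⁻¹ * log (partition η ref r₁ * partition η ref r₂
          / partition η ref (fun a => (r₁ a + r₂ a) / 2) ^ 2) := by
  have hp := gibbs_pos (η := η) href r₁
  have hq := gibbs_pos (η := η) href r₂
  have hP := mul_pos (partition_pos (η := η) href r₁) (partition_pos (η := η) href r₂)
  have hM := partition_pos (η := η) href (fun a => (r₁ a + r₂ a) / 2)
  rw [objective_gibbs_sub hη href r₁ (geomMeanPolicy_pos hp hq) (sum_geomMeanPolicy hp hq),
    objective_gibbs_sub hη href r₂ (geomMeanPolicy_pos hp hq) (sum_geomMeanPolicy hp hq),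
    ← mul_add, relEntropy_geomMeanPolicy_add hp hq, sum_sqrt_gibbs_mul href,
    log_div hP.ne' (pow_pos hM 2).ne', log_div hM.ne' (sqrt_pos.2 hP).ne', log_pow, log_sqrt hP.le]
  push_cast
  ring

lemma half_le_log_hardInstance_ratio {K t : ℝ} (hK : 9 ≤ K) (ht : 2 * log K ≤ t) :
    t / 2 ≤ log ((exp t + K - 1) * (exp t + exp t ^ 2 + K - 2)
      / (2 * exp t + K - 2) ^ 2) := by
  set E := exp t
  have hKE : K ^ 2 ≤ E := by
    calc K ^ 2 = exp (2 * log K) := by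
          rw [mul_comm, exp_mul, exp_log (by linarith)]; norm_cast
      _ ≤ E := exp_le_exp.2 ht
  have hE : 0 < E := exp_pos t
  have hC : 0 < 2 * E + K - 2 := by linarith
  have hC3 : 2 * E + K - 2 ≤ 3 * E := by nlinarith
  have hratio : E / 9 ≤ (E + K - 1) * (E + E ^ 2 + K - 2) / (2 * E + K - 2) ^ 2 := by
    rw [div_le_div_iff₀ (by norm_num) (by positivity)]
    have hC2 : (2 * E + K - 2) ^ 2 ≤ 9 * E ^ 2 := by nlinarith
    have hAB : E * E ^ 2 ≤ (E + K - 1) * (E + E ^ 2 + K - 2) := by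
      apply mul_le_mul <;> nlinarith
    nlinarith
  have hlog9 : log 9 ≤ log K := log_le_log (by norm_num) hK
  calc t / 2 ≤ t - log 9 := by linarith
    _ = log (E / 9) := by rw [log_div hE.ne' (by norm_num), log_exp]
    _ ≤ _ := log_le_log (by positivity) hratio

lemma hardInstance_partition_ratio {K : ℕ} (hK : 2 ≤ K) (η δ : ℝ) (r₁ r₂ : Fin K → ℝ)
    (hr₁ : ∀ i, r₁ i = if i.val = 0 then δ else 0)
    (hr₂ : ∀ i, r₂ i = if i.val = 1 then 2 * δ else r₁ i) :
    partition η (fun _ => 1 / (K : ℝ)) r₁ * partition η (fun _ => 1 / (K : ℝ)) r₂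
        / partition η (fun _ => 1 / (K : ℝ)) (fun a => (r₁ a + r₂ a) / 2) ^ 2
      = (exp (η * δ) + K - 1) * (exp (η * δ) + exp (η * δ) ^ 2 + K - 2)
        / (2 * exp (η * δ) + K - 2) ^ 2 := by
  have tail : ∀ a : Fin K, 2 ≤ a.val → r₁ a = 0 ∧ r₂ a = 0 := fun a ha => by
    simp [hr₂, hr₁, show a.val ≠ 0 by omega, show a.val ≠ 1 by omega]
  simp only [partition]
  rw [Fin.sum_eq_of_eq_const_of_two_le hK _ (1 / K) fun a ha => by simp [(tail a ha).1],
    Fin.sum_eq_of_eq_const_of_two_le hK _ (1 / K) fun a ha => by simp [(tail a ha).2],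
    Fin.sum_eq_of_eq_const_of_two_le hK _ (1 / K) fun a ha => by simp [tail a ha]]
  have hK0 : (0 : ℝ) < K := by exact_mod_cast (by omega : 0 < K)
  have hexp2 : exp (η * (2 * δ)) = exp (η * δ) ^ 2 := by
    rw [← exp_nat_mul]; ring_nf
  simp only [one_div, hr₁, hr₂, hexp2, ↓reduceIte, one_ne_zero, zero_ne_one, mul_zero, exp_zero,
    mul_one, add_self_div_two, zero_add, ne_eq, OfNat.ofNat_ne_zero, not_false_eq_true,
    mul_div_cancel_left₀]
  field_simp
  ring

end KLRegularizedBandit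

open KLRegularizedBandit

open Finset in
theorem stmt_16_general (K : ℕ) (hK : 9 ≤ K) (η δ : ℝ) (hη : 0 < η)
    (hsep : 2 * Real.log K ≤ η * δ)
    (πref : Fin K → ℝ) (href : ∀ a, πref a = 1 / K)
    (r₁ r₂ : Fin K → ℝ)
    (hr₁ : ∀ i, r₁ i = if i.val = 0 then δ else 0)
    (hr₂ : ∀ i, r₂ i = if i.val = 1 then 2 * δ else r₁ i)
    (J : (Fin K → ℝ) → (Fin K → ℝ) → ℝ)
    (hJ : ∀ r π, J r π = ∑ a, π a * (r a - η⁻¹ * Real.log (π a / πref a)))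
    (π₁ π₂ πhat : Fin K → ℝ)
    (h₁ : ∀ a, π₁ a = πref a * Real.exp (η * r₁ a)
        / ∑ b, πref b * Real.exp (η * r₁ b))
    (h₂ : ∀ a, π₂ a = πref a * Real.exp (η * r₂ a)
        / ∑ b, πref b * Real.exp (η * r₂ b))
    (hhat : ∀ a, πhat a = Real.sqrt (π₁ a * π₂ a)
        / ∑ b, Real.sqrt (π₁ b * π₂ b)) :
    (J r₁ π₁ - J r₁ πhat) + (J r₂ π₂ - J r₂ πhat) ≥ δ / 2 := by
  obtain rfl : J = objective η πref := funext fun r => funext (hJ r)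
  obtain rfl : π₁ = gibbs η πref r₁ := funext h₁
  obtain rfl : π₂ = gibbs η πref r₂ := funext h₂
  obtain rfl : πhat = geomMeanPolicy (gibbs η πref r₁) (gibbs η πref r₂) := funext hhat
  obtain rfl : πref = fun _ => 1 / (K : ℝ) := funext href
  have hK0 : (0 : ℝ) < K := by exact_mod_cast (by omega : 0 < K)
  have : Nonempty (Fin K) := ⟨⟨0, by omega⟩⟩
  rw [objective_gap_add_geomMeanPolicy hη.ne' (fun _ => one_div_pos.2 hK0),
    hardInstance_partition_ratio (by omega) η δ r₁ r₂ hr₁ hr₂]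
  calc δ / 2 = η⁻¹ * (η * δ / 2) := by field_simp
    _ ≤ _ := mul_le_mul_of_nonneg_left
      (half_le_log_hardInstance_ratio (by exact_mod_cast hK) hsep) (inv_nonneg.2 hη.le)

open Finset in
/-- On the two hard instances of the low-regularization lower bound
(`K`-armed bandit, uniform reference policy, `r₁(1)=δ`, `r₂(2)=2δ`), the
geometric-mean policy `π̂(a) ∝ √(π₁*(a)π₂*(a))` satisfies
`SubOpt₁(π̂) + SubOpt₂(π̂) ≥ δ/2` whenever `ηδ ≥ 2 log K` and `K ≥ 9`. -/
theorem stmt_16 (K : ℕ) (hK : 9 ≤ K) (η δ : ℝ) (hη : 0 < η) (hδ : 0 < δ)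
    (hsep : 2 * Real.log K ≤ η * δ)
    (πref : Fin K → ℝ) (href : ∀ a, πref a = 1 / K)
    (r₁ r₂ : Fin K → ℝ)
    (hr₁ : ∀ i, r₁ i = if i.val = 0 then δ else 0)
    (hr₂ : ∀ i, r₂ i = if i.val = 1 then 2 * δ else r₁ i)
    (J : (Fin K → ℝ) → (Fin K → ℝ) → ℝ)
    (hJ : ∀ r π, J r π = ∑ a, π a * (r a - η⁻¹ * Real.log (π a / πref a)))
    (π₁ π₂ πhat : Fin K → ℝ)
    (h₁ : ∀ a, π₁ a = πref a * Real.exp (η * r₁ a)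
        / ∑ b, πref b * Real.exp (η * r₁ b))
    (h₂ : ∀ a, π₂ a = πref a * Real.exp (η * r₂ a)
        / ∑ b, πref b * Real.exp (η * r₂ b))
    (hhat : ∀ a, πhat a = Real.sqrt (π₁ a * π₂ a)
        / ∑ b, Real.sqrt (π₁ b * π₂ b)) :
    (J r₁ π₁ - J r₁ πhat) + (J r₂ π₂ - J r₂ πhat) ≥ δ / 2 :=
  stmt_16_general K hK η δ hη hsep πref href r₁ r₂ hr₁ hr₂ J hJ π₁ π₂ πhat h₁ h₂ hhat
end

section
/- Let $K, m \geq 1$, $\eta > 0$, $\delta > 0$, $\alpha \geq 2\delta$, and let $M$ be a real number with $K e^{\eta\alpha} \leq M \leq 2K e^{\eta\alpha}$, and let $x_1,\dots,x_m \in [-\alpha+\delta, \alpha-\delta]$. Then $\log\Big(1 + \frac{2M}{(\sum_{j=1}^m e^{\eta x_j} + M)^2}\sum_{j=1}^m e^{\eta x_j}\big(\cosh(\eta\delta) - 1\big)\Big) \geq \log\Big(1 + \frac{m\,\eta^2\delta^2}{5K e^{2\eta\alpha}}\Big) \geq \frac{m\,\eta\,\delta^2}{10 K e^{2\eta\alpha}}\cdot\eta$.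 -/
/-!
Put `E = exp (η α)` and `S = ∑ exp (η xⱼ)`. Since `|xⱼ| ≤ α`, we have `m / E ≤ S ≤ m E ≤ K E ≤ M`,
and on `K E ≤ M ≤ 2 K E` the weight `2 M / (S + M)²` is at least `4 / (9 K E)`. Together with
`cosh t - 1 ≥ t² / 2` this bounds the argument of the first logarithm below by
`2 m η² δ² / (9 K E²)`, which exceeds `T = m η² δ² / (5 K E²)`. Finally
`(η δ)² ≤ (η α)² ≤ 2 E` gives `T ≤ 1`, where `log (1 + T) ≥ T / 2`.
-/

open Finset Real

lemma Real.sq_div_two_le_cosh_sub_one (t : ℝ) : t ^ 2 / 2 ≤ cosh t - 1 := by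
  have hcosh : cosh t = 2 * sinh (t / 2) ^ 2 + 1 := by
    conv_lhs => rw [← add_halves t, cosh_add]
    linear_combination cosh_sq' (t / 2)
  have hsinh : (t / 2) ^ 2 ≤ sinh (t / 2) ^ 2 :=
    sq_le_sq.2 (by rw [abs_sinh]; exact self_le_sinh_iff.2 (abs_nonneg _))
  linarith

lemma Real.half_le_log_one_add {x : ℝ} (h₀ : 0 ≤ x) (h₁ : x ≤ 1) : x / 2 ≤ log (1 + x) := by
  calc x / 2 ≤ x / (1 + x) := div_le_div_of_nonneg_left h₀ (by linarith) (by linarith)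
    _ = 1 - (1 + x)⁻¹ := by field_simp; ring
    _ ≤ log (1 + x) := one_sub_inv_le_log_of_pos (by linarith)

lemma Real.sq_le_two_mul_exp {t : ℝ} (ht : 0 ≤ t) : t ^ 2 ≤ 2 * exp t := by
  nlinarith [quadratic_le_exp_of_nonneg ht]

lemma Real.sum_exp_mul_mem_Icc {ι : Type*} [Fintype ι] {η a : ℝ} (hη : 0 ≤ η) {x : ι → ℝ}
    (hx : ∀ i, x i ∈ Set.Icc (-a) a) :
    ∑ i, exp (η * x i) ∈
      Set.Icc (Fintype.card ι * exp (-(η * a))) (Fintype.card ι * exp (η * a)) := by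
  constructor
  · simpa using card_nsmul_le_sum univ (fun i ↦ exp (η * x i)) _ fun i _ ↦
      exp_le_exp.2 (by nlinarith [(hx i).1])
  · simpa using sum_le_card_nsmul univ (fun i ↦ exp (η * x i)) _ fun i _ ↦
      exp_le_exp.2 (by nlinarith [(hx i).2])

lemma four_div_le_two_mul_div_sq {c S M : ℝ} (hc : 0 < c) (hS₀ : 0 ≤ S) (hS : S ≤ c)
    (hM₁ : c ≤ M) (hM₂ : M ≤ 2 * c) : 4 / (9 * c) ≤ 2 * M / (S + M) ^ 2 := by
  have hM : 0 < M := hc.trans_le hM₁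
  calc 4 / (9 * c) ≤ 2 * M / (c + M) ^ 2 := by
        rw [div_le_div_iff₀ (by positivity) (by positivity)]
        nlinarith [mul_nonneg (sub_nonneg.2 hM₁) (sub_nonneg.2 hM₂)]
    _ ≤ 2 * M / (S + M) ^ 2 := by gcongr

lemma div_le_two_mul_div_sq_mul_of_bounds {K E m S M C η δ : ℝ} (hK : 0 < K) (hE : 0 < E)
    (hm : 0 ≤ m) (hS₀ : m * E⁻¹ ≤ S) (hS₁ : S ≤ K * E) (hM₁ : K * E ≤ M) (hM₂ : M ≤ 2 * K * E)
    (hC : (η * δ) ^ 2 / 2 ≤ C) :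
    m * η ^ 2 * δ ^ 2 / (5 * K * E ^ 2) ≤ 2 * M / (S + M) ^ 2 * (S * C) := by
  have hS : 0 ≤ S := (by positivity : 0 ≤ m * E⁻¹).trans hS₀
  have hM : 0 < M := (by positivity : 0 < K * E).trans_le hM₁
  calc m * η ^ 2 * δ ^ 2 / (5 * K * E ^ 2)
      ≤ 4 / (9 * (K * E)) * (m * E⁻¹ * ((η * δ) ^ 2 / 2)) := by
        rw [div_le_iff₀ (by positivity)]
        field_simp
        nlinarith [mul_nonneg hm (sq_nonneg (η * δ))]
    _ ≤ 2 * M / (S + M) ^ 2 * (S * C) := by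
        refine mul_le_mul ?_ (mul_le_mul hS₀ hC (by positivity) hS) (by positivity)
          (div_nonneg (by linarith) (sq_nonneg _))
        exact four_div_le_two_mul_div_sq (by positivity) hS hS₁ hM₁ (by linarith)

lemma mul_sq_mul_sq_div_le_one {K m η δ α : ℝ} (hK : 0 < K) (hmK : m ≤ K) (hη : 0 ≤ η)
    (hδ : 0 ≤ δ) (hδα : δ ≤ α) : m * η ^ 2 * δ ^ 2 / (5 * K * exp (η * α) ^ 2) ≤ 1 := by
  have hE : 1 ≤ exp (η * α) := one_le_exp (mul_nonneg hη (hδ.trans hδα))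
  have hηδ : (η * δ) ^ 2 ≤ 2 * exp (η * α) ^ 2 :=
    calc (η * δ) ^ 2 ≤ (η * α) ^ 2 := by gcongr
      _ ≤ 2 * exp (η * α) := sq_le_two_mul_exp (mul_nonneg hη (hδ.trans hδα))
      _ ≤ 2 * exp (η * α) ^ 2 := by nlinarith
  rw [div_le_one (by positivity)]
  nlinarith [mul_le_mul hmK hηδ (sq_nonneg _) hK.le]

open Finset in
theorem stmt_17_general (K m : ℕ) (hK : 1 ≤ K) (hmK : m ≤ K)
    (η δ α M : ℝ) (hη : 0 < η) (hδ : 0 < δ) (hα : 2 * δ ≤ α)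
    (hM₁ : K * Real.exp (η * α) ≤ M) (hM₂ : M ≤ 2 * K * Real.exp (η * α))
    (x : Fin m → ℝ) (hx : ∀ j, x j ∈ Set.Icc (-α + δ) (α - δ)) :
    Real.log (1 + 2 * M / (∑ j, Real.exp (η * x j) + M) ^ 2
          * ∑ j, Real.exp (η * x j) * (Real.cosh (η * δ) - 1))
        ≥ Real.log (1 + m * η ^ 2 * δ ^ 2 / (5 * K * Real.exp (2 * η * α))) ∧
      Real.log (1 + m * η ^ 2 * δ ^ 2 / (5 * K * Real.exp (2 * η * α)))
        ≥ m * η * δ ^ 2 / (10 * K * Real.exp (2 * η * α)) * η := by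
  have hK' : (0 : ℝ) < K := by exact_mod_cast hK
  have hmK' : (m : ℝ) ≤ K := by exact_mod_cast hmK
  obtain ⟨hS₀, hS₁⟩ := sum_exp_mul_mem_Icc hη.le (x := x) (a := α)
    fun j ↦ ⟨by linarith [(hx j).1], by linarith [(hx j).2]⟩
  rw [Fintype.card_fin, exp_neg] at hS₀
  rw [Fintype.card_fin] at hS₁
  have hE2 : exp (2 * η * α) = exp (η * α) ^ 2 := by rw [sq, ← exp_add]; ring_nf
  have hT₁ := mul_sq_mul_sq_div_le_one hK' hmK' hη.le hδ.le (by linarith : δ ≤ α)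
  have hkey := div_le_two_mul_div_sq_mul_of_bounds hK' (exp_pos _) m.cast_nonneg hS₀
    (hS₁.trans (by gcongr)) hM₁ hM₂ (sq_div_two_le_cosh_sub_one (η * δ))
  rw [← hE2] at hT₁ hkey
  rw [← sum_mul]
  constructor
  · exact log_le_log (by positivity) (by linarith)
  · rw [show m * η * δ ^ 2 / (10 * K * exp (2 * η * α)) * η
      = m * η ^ 2 * δ ^ 2 / (5 * K * exp (2 * η * α)) / 2 by ring]
    exact half_le_log_one_add (by positivity) hT₁

open Finset in
/-- Key quantitative step of the high-regularization lower bound. -/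
theorem stmt_17 (K m : ℕ) (hK : 1 ≤ K) (hm : 1 ≤ m) (hmK : m ≤ K)
    (η δ α M : ℝ) (hη : 0 < η) (hδ : 0 < δ) (hα : 2 * δ ≤ α)
    (hM₁ : K * Real.exp (η * α) ≤ M) (hM₂ : M ≤ 2 * K * Real.exp (η * α))
    (x : Fin m → ℝ) (hx : ∀ j, x j ∈ Set.Icc (-α + δ) (α - δ)) :
    Real.log (1 + 2 * M / (∑ j, Real.exp (η * x j) + M) ^ 2
          * ∑ j, Real.exp (η * x j) * (Real.cosh (η * δ) - 1))
        ≥ Real.log (1 + m * η ^ 2 * δ ^ 2 / (5 * K * Real.exp (2 * η * α))) ∧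
      Real.log (1 + m * η ^ 2 * δ ^ 2 / (5 * K * Real.exp (2 * η * α)))
        ≥ m * η * δ ^ 2 / (10 * K * Real.exp (2 * η * α)) * η :=
  stmt_17_general K m hK hmK η δ α M hη hδ hα hM₁ hM₂ x hx
end
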